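/- Consider a feedforward neural network: given input x ∈ ℝ^{d₀} and weight matrices W_l ∈ ℝ^{d_l × d_{l−1}} for l = 1, …, L, define h₀ = x, a_l = W_l h_{l−1}, and h_l = σ(a_l) componentwise for l < L, where σ : ℝ → ℝ is twice differentiable, and let the sample loss be ℒ = ℓ(a_L) for a twice-differentiable ℓ : ℝ^{d_L} → ℝ; derivatives of ℒ are taken with the input x fixed. Fix a layer l < L and suppose the off-diagonal Hessian entries of ℒ with respect to the activation inputs of layer l+1 vanish: ∂²ℒ/∂a_{l+1,k}∂a_{l+1,k'} = 0 for all k ≠ k'. Then for every i, j: (i) ∂²ℒ/∂a²_{l,i} = Σ_{k=1}^{d_{l+1}} [ (∂²ℒ/∂a²_{l+1,k}) · W²_{l+1,k,i} · σ'(a_{l,i})² + (∂ℒ/∂a_{l+1,k}) · W_{l+1,k,i} · σ''(a_{l,i}) ], and (ii) ∂²ℒ/∂W²_{l,i,j} = (∂²ℒ/∂a²_{l,i}) · h²_{l−1,j}, where (ii) holds unconditionally for every layer. -/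

import Mathlib

/-!
Feedforward network: input `x ∈ ℝ^{d 0}`, weights `W l : Fin (d (l+1)) → Fin (d l) → ℝ`
(the matrix mapping the activation outputs of layer `l` to the activation inputs of
layer `l+1`; in the paper's notation `W l = W_{l+1}`), activation `σ` applied
componentwise, and loss `ℒ = ℓ(a_L)` where `a_L` is the activation-input vector of the
last layer `L`.
-/

/-- `hval d W σ x l` is the activation-output vector `h_l` of layer `l` (with `h_0 = x`). -/
noncomputable def hval (d : ℕ → ℕ) (W : ∀ l : ℕ, Fin (d (l + 1)) → Fin (d l) → ℝ)
    (σ : ℝ → ℝ) (x : Fin (d 0) → ℝ) : (l : ℕ) → Fin (d l) → ℝ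
  | 0 => x
  | (l + 1) => fun i => σ (∑ j, W l i j * hval d W σ x l j)

/-- `aval d W σ x l` is the activation-input vector `a_{l+1}` of layer `l + 1`. -/
noncomputable def aval (d : ℕ → ℕ) (W : ∀ l : ℕ, Fin (d (l + 1)) → Fin (d l) → ℝ)
    (σ : ℝ → ℝ) (x : Fin (d 0) → ℝ) (l : ℕ) : Fin (d (l + 1)) → ℝ :=
  fun i => ∑ j, W l i j * hval d W σ x l j

/-- `Phi L d W σ ℓ l` is the loss viewed as a function of the activation-input vector of
layer `l` (the "tail" of the network from layer `l` on): `Phi L a = ℓ a` and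
`Phi l a = Phi (l+1) (W l * σ(a))` for `l < L`. -/
noncomputable def Phi (L : ℕ) (d : ℕ → ℕ) (W : ∀ l : ℕ, Fin (d (l + 1)) → Fin (d l) → ℝ)
    (σ : ℝ → ℝ) (ℓ : (Fin (d L) → ℝ) → ℝ) (l : ℕ) : (Fin (d l) → ℝ) → ℝ :=
  if h : l < L then
    fun a => Phi L d W σ ℓ (l + 1) (fun i => ∑ j, W l i j * σ (a j))
  else if he : l = L then
    fun a => ℓ (fun i => a (Fin.cast (congrArg d he.symm) i))
  else fun _ => 0
termination_by L - l
decreasing_by omega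

/-- `dA L d W σ ℓ x l i = ∂ℒ/∂a_{l+1,i}`: the partial derivative of the loss with respect
to the `i`-th activation input of layer `l + 1`, at the forward values. -/
noncomputable def dA (L : ℕ) (d : ℕ → ℕ) (W : ∀ l : ℕ, Fin (d (l + 1)) → Fin (d l) → ℝ)
    (σ : ℝ → ℝ) (ℓ : (Fin (d L) → ℝ) → ℝ) (x : Fin (d 0) → ℝ)
    (l : ℕ) (i : Fin (d (l + 1))) : ℝ :=
  deriv (fun t => Phi L d W σ ℓ (l + 1) (Function.update (aval d W σ x l) i t))
    (aval d W σ x l i)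

/-- `d2A L d W σ ℓ x l i = ∂²ℒ/∂a²_{l+1,i}`: the diagonal second partial derivative of the
loss with respect to the `i`-th activation input of layer `l + 1`. -/
noncomputable def d2A (L : ℕ) (d : ℕ → ℕ) (W : ∀ l : ℕ, Fin (d (l + 1)) → Fin (d l) → ℝ)
    (σ : ℝ → ℝ) (ℓ : (Fin (d L) → ℝ) → ℝ) (x : Fin (d 0) → ℝ)
    (l : ℕ) (i : Fin (d (l + 1))) : ℝ :=
  iteratedDeriv 2 (fun t => Phi L d W σ ℓ (l + 1) (Function.update (aval d W σ x l) i t))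
    (aval d W σ x l i)

/-- `HA L d W σ ℓ x l k k' = ∂²ℒ/∂a_{l+1,k}∂a_{l+1,k'}`: the mixed second partial
derivative of the loss with respect to the activation inputs of layer `l + 1`. -/
noncomputable def HA (L : ℕ) (d : ℕ → ℕ) (W : ∀ l : ℕ, Fin (d (l + 1)) → Fin (d l) → ℝ)
    (σ : ℝ → ℝ) (ℓ : (Fin (d L) → ℝ) → ℝ) (x : Fin (d 0) → ℝ)
    (l : ℕ) (k k' : Fin (d (l + 1))) : ℝ :=
  deriv (fun s => deriv
      (fun t => Phi L d W σ ℓ (l + 1)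
        (Function.update (Function.update (aval d W σ x l) k' s) k t))
      (Function.update (aval d W σ x l) k' s k))
    (aval d W σ x l k')

/-- `wSlice L d W σ ℓ x l i j` is the loss viewed as a function of the single weight
`W l i j`, with all other weights (and the input) fixed. -/
noncomputable def wSlice (L : ℕ) (d : ℕ → ℕ) (W : ∀ l : ℕ, Fin (d (l + 1)) → Fin (d l) → ℝ)
    (σ : ℝ → ℝ) (ℓ : (Fin (d L) → ℝ) → ℝ) (x : Fin (d 0) → ℝ)
    (l : ℕ) (i : Fin (d (l + 1))) (j : Fin (d l)) (t : ℝ) : ℝ :=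
  Phi L d W σ ℓ (l + 1)
    (fun i' => ∑ j',
      Function.update (W l) i (Function.update (W l i) j t) i' j' * hval d W σ x l j')

/-- `dW L d W σ ℓ x l i j = ∂ℒ/∂W_{l+1,i,j}`: the partial derivative of the loss with
respect to the weight `W l i j`. -/
noncomputable def dW (L : ℕ) (d : ℕ → ℕ) (W : ∀ l : ℕ, Fin (d (l + 1)) → Fin (d l) → ℝ)
    (σ : ℝ → ℝ) (ℓ : (Fin (d L) → ℝ) → ℝ) (x : Fin (d 0) → ℝ)
    (l : ℕ) (i : Fin (d (l + 1))) (j : Fin (d l)) : ℝ :=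
  deriv (wSlice L d W σ ℓ x l i j) (W l i j)

/-- `d2W L d W σ ℓ x l i j = ∂²ℒ/∂W²_{l+1,i,j}`: the diagonal second partial derivative of
the loss with respect to the weight `W l i j`. -/
noncomputable def d2W (L : ℕ) (d : ℕ → ℕ) (W : ∀ l : ℕ, Fin (d (l + 1)) → Fin (d l) → ℝ)
    (σ : ℝ → ℝ) (ℓ : (Fin (d L) → ℝ) → ℝ) (x : Fin (d 0) → ℝ)
    (l : ℕ) (i : Fin (d (l + 1))) (j : Fin (d l)) : ℝ :=
  iteratedDeriv 2 (wSlice L d W σ ℓ x l i j) (W l i j)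

/-!
Along the `i`-th coordinate of layer `l`, the tail loss factors as `t ↦ ψ (σ t)`, where `ψ`
restricts the tail `Φ` of layer `l + 1` to the line through `a_{l+1}` in the direction
`w = W_{l+1,·,i}`. The one-dimensional chain rule gives `ψ'' σ'² + ψ' σ''`, with `ψ' = ∇Φ · w`
and `ψ'' = wᵀ ∇²Φ w`; once the off-diagonal entries of `∇²Φ` vanish, this quadratic form is
`Σ_k w_k² ∂²Φ/∂a_k²`. A weight `W_{l,i,j}` enters the loss only through `a_{l,i}`, affinely
with slope `h_{l-1,j}`, which contributes the factor `h_{l-1,j}²`.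
-/

open Function

section Calculus

variable {E : Type*} [NormedAddCommGroup E] [NormedSpace ℝ E] {f : E → ℝ} {c : ℝ → E} {v : E}

theorem deriv_comp_line (hf : Differentiable ℝ f) (hc : ∀ t, HasDerivAt c v t) :
    deriv (fun t => f (c t)) = fun t => fderiv ℝ f (c t) v :=
  funext fun t => ((hf (c t)).hasFDerivAt.comp_hasDerivAt t (hc t)).deriv

theorem deriv_fderiv_apply_comp_line (hf : ContDiff ℝ 2 f) (hc : ∀ t, HasDerivAt c v t)
    (u : E) (t : ℝ) :
    deriv (fun t => fderiv ℝ f (c t) u) t = fderiv ℝ (fderiv ℝ f) (c t) v u := by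
  have hf' : Differentiable ℝ (fderiv ℝ f) :=
    (hf.fderiv_right (m := 1) le_rfl).differentiable one_ne_zero
  have h := (hf' (c t)).hasFDerivAt.comp_hasDerivAt t (hc t)
  simpa using (h.clm_apply (hasDerivAt_const t u)).deriv

theorem deriv_deriv_comp_line (hf : ContDiff ℝ 2 f) (hc : ∀ t, HasDerivAt c v t) (t : ℝ) :
    deriv (deriv fun t => f (c t)) t = fderiv ℝ (fderiv ℝ f) (c t) v v := by
  rw [deriv_comp_line (hf.differentiable two_ne_zero) hc, deriv_fderiv_apply_comp_line hf hc]

theorem deriv_deriv_comp {ψ u : ℝ → ℝ} (hψ : ContDiff ℝ 2 ψ) (hu : ContDiff ℝ 2 u) (t : ℝ) :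
    deriv (deriv fun s => ψ (u s)) t =
      deriv (deriv ψ) (u t) * deriv u t ^ 2 + deriv ψ (u t) * deriv (deriv u) t := by
  have hψ1 := hψ.differentiable two_ne_zero
  have hu1 := hu.differentiable two_ne_zero
  have h₁ : deriv (fun s => ψ (u s)) = fun s => deriv ψ (u s) * deriv u s :=
    funext fun s => ((hψ1 (u s)).hasDerivAt.comp s (hu1 s).hasDerivAt).deriv
  have h₂ := ((hψ.differentiable_deriv_two (u t)).hasDerivAt.comp t (hu1 t).hasDerivAt).mul
    (hu.differentiable_deriv_two t).hasDerivAt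
  rw [h₁]
  exact h₂.deriv.trans (by simp only [comp_apply]; ring)

end Calculus

section Coordinates

variable {ι : Type*} [Fintype ι] [DecidableEq ι]

theorem Fintype.sum_apply_update {β M : Type*} [AddCommGroup M] (F : ι → β → M) (a : ι → β)
    (i : ι) (b : β) : ∑ j, F j (update a i b j) = ∑ j, F j (a j) + (F i b - F i (a i)) := by
  simp_rw [apply_update F a i b]
  rw [Finset.sum_update_of_mem (Finset.mem_univ i),
    Finset.sum_eq_add_sum_sdiff_singleton_of_mem (Finset.mem_univ i)]
  abel

theorem ContinuousLinearMap.apply_eq_sum_smul_apply_single {M : Type*} [AddCommGroup M]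
    [Module ℝ M] [TopologicalSpace M] (g : (ι → ℝ) →L[ℝ] M) (w : ι → ℝ) :
    g w = ∑ k, w k • g (Pi.single k 1) := by
  have hsingle (k : ι) : Pi.single k (w k) = w k • Pi.single k (1 : ℝ) := by
    rw [← Pi.single_smul', smul_eq_mul, mul_one]
  conv_lhs => rw [← Finset.univ_sum_single w]
  simp_rw [map_sum, hsingle, map_smul]

theorem ContinuousLinearMap.apply_apply_self_eq_sum_of_offDiag_eq_zero
    (B : (ι → ℝ) →L[ℝ] (ι → ℝ) →L[ℝ] ℝ)
    (hB : ∀ k k', k ≠ k' → B (Pi.single k 1) (Pi.single k' 1) = 0) (w : ι → ℝ) :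
    B w w = ∑ k, w k ^ 2 * B (Pi.single k 1) (Pi.single k 1) := by
  rw [B.apply_eq_sum_smul_apply_single w, sum_apply]
  refine Finset.sum_congr rfl fun k _ => ?_
  rw [smul_apply, apply_eq_sum_smul_apply_single,
    Finset.sum_eq_single k (fun k' _ hk' => by rw [hB k k' hk'.symm, smul_zero])
      (fun h => absurd (Finset.mem_univ k) h)]
  simp only [smul_eq_mul]
  ring

variable {f : (ι → ℝ) → ℝ}

theorem deriv_comp_update (hf : Differentiable ℝ f) (y : ι → ℝ) (k : ι) :
    deriv (fun t => f (update y k t)) = fun t => fderiv ℝ f (update y k t) (Pi.single k 1) :=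
  deriv_comp_line hf (hasDerivAt_update y k)

theorem iteratedDeriv_two_comp_update (hf : ContDiff ℝ 2 f) (y : ι → ℝ) (k : ι) :
    iteratedDeriv 2 (fun t => f (update y k t)) (y k) =
      fderiv ℝ (fderiv ℝ f) y (Pi.single k 1) (Pi.single k 1) := by
  rw [iteratedDeriv_succ, iteratedDeriv_one, deriv_deriv_comp_line hf (hasDerivAt_update y k),
    update_eq_self]

theorem deriv_deriv_comp_update_update (hf : ContDiff ℝ 2 f) (y : ι → ℝ) (k k' : ι) :
    deriv (fun s => deriv (fun t => f (update (update y k' s) k t)) (update y k' s k)) (y k') =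
      fderiv ℝ (fderiv ℝ f) y (Pi.single k' 1) (Pi.single k 1) := by
  simp_rw [deriv_comp_update (hf.differentiable two_ne_zero), update_eq_self]
  rw [deriv_fderiv_apply_comp_line hf (hasDerivAt_update y k'), update_eq_self]

theorem deriv_deriv_comp_add_smul_eq_sum {φ : ℝ → ℝ} (hf : ContDiff ℝ 2 f)
    (hφ : ContDiff ℝ 2 φ) (y w : ι → ℝ)
    (hoff : ∀ k k', k ≠ k' → fderiv ℝ (fderiv ℝ f) y (Pi.single k 1) (Pi.single k' 1) = 0)
    (t₀ : ℝ) :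
    deriv (deriv fun t => f (y + (φ t - φ t₀) • w)) t₀ =
      ∑ k, (fderiv ℝ (fderiv ℝ f) y (Pi.single k 1) (Pi.single k 1) * w k ^ 2 * deriv φ t₀ ^ 2
        + fderiv ℝ f y (Pi.single k 1) * w k * deriv (deriv φ) t₀) := by
  set ψ : ℝ → ℝ := fun s => f (y + (s - φ t₀) • w)
  have hline (s : ℝ) : HasDerivAt (fun s => y + (s - φ t₀) • w) w s := by
    simpa using (((hasDerivAt_id s).sub_const (φ t₀)).smul_const w).const_add y
  have hline₀ : y + (φ t₀ - φ t₀) • w = y := by simp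
  have hψ : ContDiff ℝ 2 ψ := hf.comp (by fun_prop)
  have hψ' : deriv ψ (φ t₀) = ∑ k, w k * fderiv ℝ f y (Pi.single k 1) := by
    rw [deriv_comp_line (hf.differentiable two_ne_zero) hline]
    beta_reduce
    rw [hline₀, ContinuousLinearMap.apply_eq_sum_smul_apply_single]
    simp only [smul_eq_mul]
  have hψ'' : deriv (deriv ψ) (φ t₀) =
      ∑ k, w k ^ 2 * fderiv ℝ (fderiv ℝ f) y (Pi.single k 1) (Pi.single k 1) := by
    rw [deriv_deriv_comp_line hf hline, hline₀,
      ContinuousLinearMap.apply_apply_self_eq_sum_of_offDiag_eq_zero _ hoff]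
  rw [deriv_deriv_comp hψ hφ, hψ', hψ'', Finset.sum_mul, Finset.sum_mul,
    ← Finset.sum_add_distrib]
  exact Finset.sum_congr rfl fun k _ => by ring

end Coordinates

section Network

variable {L : ℕ} {d : ℕ → ℕ} {W : ∀ l : ℕ, Fin (d (l + 1)) → Fin (d l) → ℝ}
  {σ : ℝ → ℝ} {ℓ : (Fin (d L) → ℝ) → ℝ} {x : Fin (d 0) → ℝ}

theorem Phi_of_lt {l : ℕ} (hl : l < L) :
    Phi L d W σ ℓ l = fun a => Phi L d W σ ℓ (l + 1) (fun i => ∑ j, W l i j * σ (a j)) := by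
  rw [Phi, dif_pos hl]

theorem contDiff_Phi (hσ : ContDiff ℝ 2 σ) (hℓ : ContDiff ℝ 2 ℓ) (m : ℕ) :
    ContDiff ℝ 2 (Phi L d W σ ℓ m) := by
  induction h : L - m generalizing m with
  | zero =>
    rw [Phi, dif_neg (by omega)]
    split_ifs
    · exact hℓ.comp (contDiff_pi.mpr fun i => contDiff_apply ℝ ℝ _)
    · exact contDiff_const
  | succ n ih =>
    rw [Phi_of_lt (by omega)]
    exact (ih (m + 1) (by omega)).comp <| contDiff_pi.mpr fun i =>
      ContDiff.sum fun j _ => contDiff_const.mul (hσ.comp (contDiff_apply ℝ ℝ j))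

theorem Phi_update_aval {l : ℕ} (hl : l + 1 < L) (i : Fin (d (l + 1))) (t : ℝ) :
    Phi L d W σ ℓ (l + 1) (update (aval d W σ x l) i t) =
      Phi L d W σ ℓ (l + 1 + 1)
        (aval d W σ x (l + 1) + (σ t - σ (aval d W σ x l i)) • fun k => W (l + 1) k i) := by
  rw [Phi_of_lt hl]
  dsimp only
  congr 1
  funext k
  rw [Fintype.sum_apply_update (fun j s => W (l + 1) k j * σ s)]
  simp only [aval, hval, Pi.add_apply, Pi.smul_apply, smul_eq_mul]
  ring

theorem wSlice_eq (l : ℕ) (i : Fin (d (l + 1))) (j : Fin (d l)) (t : ℝ) :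
    wSlice L d W σ ℓ x l i j t =
      Phi L d W σ ℓ (l + 1) (update (aval d W σ x l) i
        (aval d W σ x l i + (t - W l i j) * hval d W σ x l j)) := by
  rw [wSlice]
  congr 1
  funext i'
  rcases eq_or_ne i' i with rfl | hi
  · rw [update_self, update_self, Fintype.sum_apply_update (fun j' s => s * hval d W σ x l j')]
    simp only [aval]
    ring
  · simp only [update_of_ne hi, aval]

theorem dA_eq_fderiv {l : ℕ} (hΦ : Differentiable ℝ (Phi L d W σ ℓ (l + 1)))
    (k : Fin (d (l + 1))) :
    dA L d W σ ℓ x l k =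
      fderiv ℝ (Phi L d W σ ℓ (l + 1)) (aval d W σ x l) (Pi.single k 1) := by
  simp only [dA, deriv_comp_update hΦ, update_eq_self]

theorem d2A_eq_fderiv_fderiv {l : ℕ} (hΦ : ContDiff ℝ 2 (Phi L d W σ ℓ (l + 1)))
    (k : Fin (d (l + 1))) :
    d2A L d W σ ℓ x l k =
      fderiv ℝ (fderiv ℝ (Phi L d W σ ℓ (l + 1))) (aval d W σ x l)
        (Pi.single k 1) (Pi.single k 1) :=
  iteratedDeriv_two_comp_update hΦ _ k

theorem HA_eq_fderiv_fderiv {l : ℕ} (hΦ : ContDiff ℝ 2 (Phi L d W σ ℓ (l + 1)))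
    (k k' : Fin (d (l + 1))) :
    HA L d W σ ℓ x l k k' =
      fderiv ℝ (fderiv ℝ (Phi L d W σ ℓ (l + 1))) (aval d W σ x l)
        (Pi.single k' 1) (Pi.single k 1) :=
  deriv_deriv_comp_update_update hΦ _ k k'

theorem d2W_eq_d2A_mul_sq (hσ : ContDiff ℝ 2 σ) (hℓ : ContDiff ℝ 2 ℓ) (l : ℕ)
    (i : Fin (d (l + 1))) (j : Fin (d l)) :
    d2W L d W σ ℓ x l i j = d2A L d W σ ℓ x l i * hval d W σ x l j ^ 2 := by
  set g : ℝ → ℝ := fun s => Phi L d W σ ℓ (l + 1) (update (aval d W σ x l) i s)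
  set u : ℝ → ℝ := fun t => aval d W σ x l i + (t - W l i j) * hval d W σ x l j
  have hg : ContDiff ℝ 2 g :=
    (contDiff_Phi hσ hℓ _).comp (contDiff_update 2 (aval d W σ x l) i)
  have hu' : deriv u = fun _ => hval d W σ x l j := funext fun t =>
    ((((hasDerivAt_id t).sub_const (W l i j)).mul_const (hval d W σ x l j)).const_add
      (aval d W σ x l i)).deriv.trans (one_mul _)
  have hu₀ : u (W l i j) = aval d W σ x l i := by simp [u]
  have hu : ContDiff ℝ 2 u := by fun_prop
  rw [d2W, d2A, funext (wSlice_eq l i j), iteratedDeriv_succ, iteratedDeriv_one,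
    iteratedDeriv_succ, iteratedDeriv_one, deriv_deriv_comp hg hu, hu', hu₀, deriv_const,
    mul_zero, add_zero]

theorem d2A_eq_sum_of_HA_eq_zero (hσ : ContDiff ℝ 2 σ) (hℓ : ContDiff ℝ 2 ℓ) {l : ℕ}
    (hl : l + 2 ≤ L)
    (hoffdiag : ∀ k k' : Fin (d (l + 2)), k ≠ k' → HA L d W σ ℓ x (l + 1) k k' = 0)
    (i : Fin (d (l + 1))) :
    d2A L d W σ ℓ x l i =
      ∑ k : Fin (d (l + 2)),
        (d2A L d W σ ℓ x (l + 1) k * W (l + 1) k i ^ 2 * deriv σ (aval d W σ x l i) ^ 2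
          + dA L d W σ ℓ x (l + 1) k * W (l + 1) k i * deriv (deriv σ) (aval d W σ x l i)) := by
  have hΦ : ContDiff ℝ 2 (Phi L d W σ ℓ (l + 1 + 1)) := contDiff_Phi hσ hℓ _
  rw [d2A, iteratedDeriv_succ, iteratedDeriv_one]
  simp only [Phi_update_aval (show l + 1 < L by omega)]
  rw [deriv_deriv_comp_add_smul_eq_sum hΦ hσ _ _
    (fun k k' hkk' => (HA_eq_fderiv_fderiv hΦ k' k).symm.trans (hoffdiag k' k hkk'.symm))]
  simp only [d2A_eq_fderiv_fderiv hΦ, dA_eq_fderiv (hΦ.differentiable two_ne_zero)]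

end Network

/-- HesScale Hessian-diagonal backpropagation recursions (Eq. 13–14): if the off-diagonal
Hessian entries of the loss with respect to the activation inputs of the next layer
vanish, then
(i) `∂²ℒ/∂a²_{l,i} = Σ_k [ ∂²ℒ/∂a²_{l+1,k} · W²_{l+1,k,i} · σ'(a_{l,i})²
      + ∂ℒ/∂a_{l+1,k} · W_{l+1,k,i} · σ''(a_{l,i}) ]`,
and (ii) `∂²ℒ/∂W²_{l,i,j} = ∂²ℒ/∂a²_{l,i} · h²_{l−1,j}` holds unconditionally for every
layer. (Here our index `l` corresponds to the paper's layer `l + 1`.) -/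
theorem backprop_second_order
    (L : ℕ) (d : ℕ → ℕ) (W : ∀ l : ℕ, Fin (d (l + 1)) → Fin (d l) → ℝ)
    (σ : ℝ → ℝ) (ℓ : (Fin (d L) → ℝ) → ℝ) (x : Fin (d 0) → ℝ)
    (hσ : ContDiff ℝ 2 σ) (hℓ : ContDiff ℝ 2 ℓ)
    (l : ℕ) (hl : l + 2 ≤ L)
    (hoffdiag : ∀ k k' : Fin (d (l + 2)), k ≠ k' → HA L d W σ ℓ x (l + 1) k k' = 0) :
    (∀ i : Fin (d (l + 1)),
      d2A L d W σ ℓ x l i =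
        ∑ k : Fin (d (l + 2)),
          (d2A L d W σ ℓ x (l + 1) k * (W (l + 1) k i) ^ 2 * (deriv σ (aval d W σ x l i)) ^ 2
            + dA L d W σ ℓ x (l + 1) k * W (l + 1) k i * deriv (deriv σ) (aval d W σ x l i))) ∧
    (∀ l' : ℕ, l' + 1 ≤ L → ∀ (i : Fin (d (l' + 1))) (j : Fin (d l')),
      d2W L d W σ ℓ x l' i j = d2A L d W σ ℓ x l' i * (hval d W σ x l' j) ^ 2) :=
  ⟨d2A_eq_sum_of_HA_eq_zero hσ hℓ hl hoffdiag,
    fun l' _ i j => d2W_eq_d2A_mul_sq hσ hℓ l' i j⟩
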